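/- arXiv:math/0107205 — 3 statements merged into one kernel-verified Lean document; each statement's English description precedes it below -/
import Mathlib

section
/- Let T be a strongly continuous semigroup on a complex Banach space X with generator A such that iℝ ⊂ ρ(A) and s ↦ ‖R(is)‖ is bounded on ℝ. Then for every τ > 0, x ∈ X and x* ∈ X*, the identity ř₀(t − τ, T_τ x, x*) = ř₀(t, x, x*) − ⟨x*, T_t x⟩ χ_{[0,τ]}(t) holds in the sense of tempered distributions in t; that is, ⟨ř₀(· − τ, T_τ x, x*), Φ⟩ = ⟨ř₀(·, x, x*), Φ⟩ − ∫_0^τ ⟨x*, T_r x⟩Φ(r)dr for every Schwartz function Φ. -/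
open MeasureTheory Complex Filter Topology Set
open scoped ENNReal NNReal Real

noncomputable section

/-- A strongly continuous (C₀-) semigroup of bounded linear operators on `X`. -/
structure C0Semigroup (X : Type*) [NormedAddCommGroup X] [NormedSpace ℂ X] where
  T : ℝ → X →L[ℂ] X
  T_zero : T 0 = 1
  T_add : ∀ s t : ℝ, 0 ≤ s → 0 ≤ t → T (s + t) = (T s).comp (T t)
  T_cont : ∀ x : X, ContinuousOn (fun t : ℝ => T t x) (Set.Ici (0 : ℝ))

variable {X : Type*} [NormedAddCommGroup X] [NormedSpace ℂ X]

/-- `A` (a partially defined linear operator) is the infinitesimal generator of `S`. -/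
def C0Semigroup.IsGenerator (S : C0Semigroup X) (A : X →ₗ.[ℂ] X) : Prop :=
  (∀ x : X, x ∈ A.domain ↔
    ∃ y : X, Filter.Tendsto (fun t : ℝ => t⁻¹ • (S.T t x - x)) (nhdsWithin 0 (Set.Ioi 0)) (nhds y)) ∧
  ∀ x : A.domain, Filter.Tendsto (fun t : ℝ => t⁻¹ • (S.T t (x : X) - (x : X)))
    (nhdsWithin 0 (Set.Ioi 0)) (nhds (A x))

/-- The growth bound `ω₀(T)` of a semigroup. -/
def C0Semigroup.growthBound (S : C0Semigroup X) : ℝ :=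
  sInf {ω : ℝ | ∃ M : ℝ, ∀ t : ℝ, 0 ≤ t → ‖S.T t‖ ≤ M * Real.exp (ω * t)}

/-- `R` is the resolvent `(lam - A)⁻¹` of `A` at `lam`; in particular `lam ∈ ρ(A)`. -/
def IsResolventAt (A : X →ₗ.[ℂ] X) (lam : ℂ) (R : X →L[ℂ] X) : Prop :=
  (∀ y : X, ∃ h : R y ∈ A.domain, lam • R y - A ⟨R y, h⟩ = y) ∧
  ∀ x : A.domain, R (lam • (x : X) - A x) = x

/-- `S` is hyperbolic with splitting projection `P`. -/
def C0Semigroup.IsHyperbolicWith (S : C0Semigroup X) (P : X →L[ℂ] X) : Prop :=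
  (∀ x : X, P (P x) = P x) ∧
  (∀ t : ℝ, 0 < t → ∀ x : X, P (S.T t x) = S.T t (P x)) ∧
  (∀ t : ℝ, 0 < t → ∀ x : X, P x = 0 → S.T t x = 0 → x = 0) ∧
  ∃ K ω : ℝ, 0 < K ∧ 0 < ω ∧
    (∀ t : ℝ, 0 < t → ∀ x : X, ‖S.T t (P x)‖ ≤ K * Real.exp (-ω * t) * ‖P x‖) ∧
    (∀ t : ℝ, 0 < t → ∀ x : X, P x = 0 →
      ∃ z : X, P z = 0 ∧ S.T t z = x ∧ K * Real.exp (ω * (-t)) * ‖x‖ ≤ ‖z‖)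

/-- `S` is hyperbolic. -/
def C0Semigroup.IsHyperbolic (S : C0Semigroup X) : Prop :=
  ∃ P : X →L[ℂ] X, S.IsHyperbolicWith P

/-- Fourier transform `f̂(t) = ∫ f(s) e^{-ist} ds` of a vector-valued function. -/
def fourierI (f : ℝ → X) (t : ℝ) : X :=
  ∫ s : ℝ, Complex.exp (-(Complex.I * (s : ℂ) * (t : ℂ))) • f s

/-- Inverse Fourier transform `fˇ(t) = (2π)⁻¹ ∫ f(s) e^{ist} ds`. -/
def fourierInvI (f : ℝ → X) (t : ℝ) : X :=
  (2 * Real.pi)⁻¹ • ∫ s : ℝ, Complex.exp (Complex.I * (s : ℂ) * (t : ℂ)) • f s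

/-- The Fourier multiplier operator `f ↦ (m f̂)ˇ` with operator-valued symbol `m`. -/
def mulOp (m : ℝ → X →L[ℂ] X) (f : ℝ → X) : ℝ → X :=
  fun t => fourierInvI (fun s => m s (fourierI f s)) t

/-- `m` is a Fourier multiplier on `L_p(ℝ; X)`: the associated multiplier operator is
bounded on the (dense) subspace of `X`-valued Schwartz functions. -/
def IsLpMultiplier (m : ℝ → X →L[ℂ] X) (p : ℝ≥0∞) : Prop :=
  ∃ C : ℝ, 0 ≤ C ∧ ∀ f : SchwartzMap ℝ X,
    eLpNorm (mulOp m (fun s => f s)) p volume ≤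
      ENNReal.ofReal C * eLpNorm (fun s => f s) p volume

/-- The weak-`L₁` quasinorm `sup_{σ>0} σ · mes{s : ‖f s‖ ≥ σ}`. -/
def weakL1Norm (f : ℝ → X) : ℝ≥0∞ :=
  ⨆ σ : ℝ≥0, (σ : ℝ≥0∞) * volume {s : ℝ | (σ : ℝ) ≤ ‖f s‖}

/-- The Cesàro (C,1) integral over `ℝ`:
`(C,1)∫ g = lim_{N→∞} N⁻¹ ∫_0^N ∫_{-l}^{l} g(s) ds dl`. -/
def HasCesaroIntegral (g : ℝ → X) (L : X) : Prop :=
  Filter.Tendsto (fun N : ℝ => N⁻¹ • ∫ l in (0:ℝ)..N, ∫ s in (-l)..l, g s)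
    Filter.atTop (nhds L)

/-- The Cesàro (C,1) sum over `ℤ`: `lim_N ∑_{|k|≤N} (1-|k|/N) a k`. -/
def HasCesaroSum (a : ℤ → X) (L : X) : Prop :=
  Filter.Tendsto
    (fun N : ℕ => ∑ k ∈ Finset.Icc (-(N:ℤ)) (N:ℤ), (1 - (k.natAbs : ℝ) / (N : ℝ)) • a k)
    Filter.atTop (nhds L)

/-- The closed sector with vertex `-1` and half-angle `θ` generated by the contour `γ`. -/
def sectorSet (θ : ℝ) : Set ℂ := {μ : ℂ | |Complex.arg (μ + 1)| ≤ θ}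

/-- The contour integral `(2πi)⁻¹ ∫_γ μ^{-α} R(μ+ω) x dμ` defining the fractional power
`A_ω^{-α}`, with `γ` the two rays `-1 ± t e^{iθ}`, `t ≥ 0`, traversed upwards. -/
def fracPowInt (R : ℂ → X →L[ℂ] X) (ω α θ : ℝ) (x : X) : X :=
  (2 * (Real.pi : ℂ) * Complex.I)⁻¹ • (Complex.exp ((θ : ℂ) * Complex.I) •
    ((∫ t in Set.Ioi (0:ℝ),
        ((-1 + (t : ℂ) * Complex.exp ((θ : ℂ) * Complex.I)) ^ (-(α : ℂ))) •
          R ((-1 + (t : ℂ) * Complex.exp ((θ : ℂ) * Complex.I)) + (ω : ℂ)) x) +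
     (∫ t in Set.Ioi (0:ℝ),
        ((-1 - (t : ℂ) * Complex.exp ((θ : ℂ) * Complex.I)) ^ (-(α : ℂ))) •
          R ((-1 - (t : ℂ) * Complex.exp ((θ : ℂ) * Complex.I)) + (ω : ℂ)) x)))

/-- `W` realizes the fractional power `A_ω^{-α} = (1/2πi)∫_γ μ^{-α}R(μ+ω)dμ` of the
generator `A` of `S` (with resolvent `R`); so `X_α = Rg W` with `‖W y‖_α = ‖y‖`. -/
structure IsFracPowData (S : C0Semigroup X) (A : X →ₗ.[ℂ] X) (R : ℂ → X →L[ℂ] X)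
    (α ω θ : ℝ) (W : X →L[ℂ] X) : Prop where
  halpha : 0 < α
  homega : max (S.growthBound + 3) 3 < ω
  htheta0 : 0 < θ
  htheta1 : θ < Real.pi / 6
  hsector : ∃ C : ℝ, ∀ μ ∈ sectorSet θ,
    IsResolventAt A (μ + (ω : ℂ)) (R (μ + (ω : ℂ))) ∧
    ‖R (μ + (ω : ℂ))‖ ≤ C / (1 + ‖μ‖)
  hW : ∀ x : X, W x = fracPowInt R ω α θ x

/-- For `α ≥ 0`: `W` realizes `A_ω^{-α}`, i.e. `X_α = Rg W` with `‖W y‖_α = ‖y‖`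
(`W = id` and `X₀ = X` when `α = 0`). -/
def IsAlphaData (S : C0Semigroup X) (A : X →ₗ.[ℂ] X) (R : ℂ → X →L[ℂ] X)
    (α : ℝ) (W : X →L[ℂ] X) : Prop :=
  (α = 0 ∧ W = ContinuousLinearMap.id ℂ X) ∨ ∃ ω θ : ℝ, IsFracPowData S A R α ω θ W

/-- The abscissa `s_α(A) = inf{s : sup_{Re λ > s} ‖R(λ)‖/(1+|Im λ|^α) < ∞}`. -/
def sAbscissa (A : X →ₗ.[ℂ] X) (α : ℝ) : ℝ :=
  sInf {s : ℝ | ∃ C : ℝ, ∀ lam : ℂ, s < lam.re →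
    ∃ Rl : X →L[ℂ] X, IsResolventAt A lam Rl ∧ ‖Rl‖ ≤ C * (1 + |lam.im| ^ α)}

/-- The fractional growth bound `ω_α(T)`, computed through `W` with `Rg W = X_α`,
`‖W y‖_α = ‖y‖`. -/
def fracGrowthBound (S : C0Semigroup X) (W : X →L[ℂ] X) : ℝ :=
  sInf {ω : ℝ | ∃ M : ℝ, 0 < M ∧ ∀ y : X, ∀ t : ℝ, 0 ≤ t →
    ‖S.T t (W y)‖ ≤ M * Real.exp (ω * t) * ‖y‖}

/-- A rearrangement invariant quasi-Banach function lattice on `ℝ`, described through its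
quasinorm acting on `ℝ≥0∞`-valued "absolute values" of functions. -/
structure RIQuasiLattice : Type where
  N : (ℝ → ℝ≥0∞) → ℝ≥0∞
  mono : ∀ ⦃f g : ℝ → ℝ≥0∞⦄, (∀ s, f s ≤ g s) → N f ≤ N g
  smul : ∀ (c : ℝ≥0∞) (f : ℝ → ℝ≥0∞), N (fun s => c * f s) = c * N f
  quasi : ∃ κ : ℝ≥0∞, κ < ⊤ ∧ ∀ f g : ℝ → ℝ≥0∞, N (fun s => f s + g s) ≤ κ * (N f + N g)
  rearr : ∀ f g : ℝ → ℝ≥0∞,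
    (∀ t : ℝ≥0∞, volume {s : ℝ | t < f s} = volume {s : ℝ | t < g s}) → N f = N g
  ind_pos : 0 < N (Set.indicator (Set.Icc (0:ℝ) 1) fun _ => 1)
  ind_fin : N (Set.indicator (Set.Icc (0:ℝ) 1) fun _ => 1) < ⊤

/-- A quasi-normed function lattice on the circle `𝕋 = ℝ/2πℤ` (functions on `[0,2π)`). -/
structure CircleQuasiLattice : Type where
  N : (ℝ → ℝ≥0∞) → ℝ≥0∞
  mono : ∀ ⦃f g : ℝ → ℝ≥0∞⦄, (∀ s, f s ≤ g s) → N f ≤ N g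
  smul : ∀ (c : ℝ≥0∞) (f : ℝ → ℝ≥0∞), N (fun s => c * f s) = c * N f
  quasi : ∃ κ : ℝ≥0∞, κ < ⊤ ∧ ∀ f g : ℝ → ℝ≥0∞, N (fun s => f s + g s) ≤ κ * (N f + N g)
  ind_pos : 0 < N (Set.indicator (Set.Icc (0:ℝ) 1) fun _ => 1)
  ind_fin : N (Set.indicator (Set.Icc (0:ℝ) 1) fun _ => 1) < ⊤

/-- `S` is strongly α-hyperbolic with splitting projection `P` (where `Rg W = X_α` and
`‖W y‖_α = ‖y‖`). -/
def IsStrongAlphaHyperbolicWith (S : C0Semigroup X) (W : X →L[ℂ] X) (P : X →L[ℂ] X) : Prop :=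
  (∀ x : X, P (P x) = P x) ∧
  (∀ t : ℝ, 0 ≤ t → ∀ x : X, P (S.T t x) = S.T t (P x)) ∧
  (∃ M ε : ℝ, 0 < M ∧ 0 < ε ∧ ∀ y : X, P (W y) = W y → ∀ t : ℝ, 0 ≤ t →
      ‖S.T t (W y)‖ ≤ M * Real.exp (-ε * t) * ‖y‖) ∧
  (∀ t : ℝ, 0 ≤ t → ∀ x : X, P x = 0 → ∃! z : X, P z = 0 ∧ S.T t z = x) ∧
  (∃ M ε : ℝ, 0 < M ∧ 0 < ε ∧ ∀ y : X, P (W y) = 0 → ∀ t : ℝ, 0 ≤ t →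
      ∀ z : X, P z = 0 → S.T t z = W y → ‖z‖ ≤ M * Real.exp (-ε * t) * ‖y‖)

/-! For `y = R(is) x` we have `A y = is y - x`, so `r ↦ e^{-isr} T_r y` has right derivative
`-e^{-isr} T_r x`. Integrating over `[0, τ]` and using that `T_τ` commutes with `R(is)` gives,
for every `s`,
`e^{-isτ} ⟨x*, R(is) T_τ x⟩ = ⟨x*, R(is) x⟩ - ∫_0^τ e^{-isr} ⟨x*, T_r x⟩ dr`.
Pairing with `Φˇ`, Fubini and the inversion formula `(Φˇ)^ = Φ` turn the last term into
`∫_0^τ ⟨x*, T_r x⟩ Φ(r) dr`. The resolvent identity makes the bounded resolvent Lipschitz on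
`iℝ`, which supplies the measurability behind the integrability of the first term. -/

theorem IsResolventAt.sub_eq_smul_apply {A : X →ₗ.[ℂ] X} {lam mu : ℂ} {Rl Rm : X →L[ℂ] X}
    (hRl : IsResolventAt A lam Rl) (hRm : IsResolventAt A mu Rm) (v : X) :
    Rl v - Rm v = (mu - lam) • Rm (Rl v) := by
  obtain ⟨hmem, hv⟩ := hRl.1 v
  have hsplit : mu • Rl v - A ⟨Rl v, hmem⟩ = (mu - lam) • Rl v + v := by
    linear_combination (norm := module) hv
  have h := hRm.2 ⟨Rl v, hmem⟩
  rw [hsplit, map_add, map_smul] at h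
  exact (eq_sub_of_add_eq h).symm

theorem continuous_resolvent_apply {A : X →ₗ.[ℂ] X} {R : ℝ → X →L[ℂ] X}
    (hR : ∀ s : ℝ, IsResolventAt A (Complex.I * (s : ℂ)) (R s)) {C : ℝ} (hC : ∀ s, ‖R s‖ ≤ C)
    (v : X) : Continuous fun s : ℝ => R s v := by
  have hC0 : 0 ≤ C := (norm_nonneg _).trans (hC 0)
  refine (LipschitzWith.of_dist_le_mul (K := (C * (C * ‖v‖)).toNNReal) fun a b => ?_).continuous
  rw [dist_eq_norm, (hR a).sub_eq_smul_apply (hR b), norm_smul, ← mul_sub, norm_mul,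
    Complex.norm_I, one_mul, ← Complex.ofReal_sub, Complex.norm_real, ← dist_eq_norm, dist_comm,
    Real.coe_toNNReal _ (by positivity), mul_comm]
  gcongr
  calc ‖R b (R a v)‖ ≤ C * ‖R a v‖ := (R b).le_of_opNorm_le (hC b) _
    _ ≤ C * (C * ‖v‖) := by gcongr; exact (R a).le_of_opNorm_le (hC a) _

namespace C0Semigroup

variable (S : C0Semigroup X)

theorem T_apply_comm {s t : ℝ} (hs : 0 ≤ s) (ht : 0 ≤ t) (x : X) :
    S.T s (S.T t x) = S.T t (S.T s x) := by
  rw [← ContinuousLinearMap.comp_apply, ← S.T_add s t hs ht, add_comm, S.T_add t s ht hs,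
    ContinuousLinearMap.comp_apply]

variable {S} {A : X →ₗ.[ℂ] X} {lam : ℂ} {Rl : X →L[ℂ] X}

namespace IsGenerator

theorem tendsto_slope_T_apply (hGen : S.IsGenerator A) {t : ℝ} (ht : 0 ≤ t) (y : A.domain) :
    Tendsto (fun h : ℝ => h⁻¹ • (S.T h (S.T t (y : X)) - S.T t (y : X))) (𝓝[>] 0)
      (𝓝 (S.T t (A y))) := by
  refine (((S.T t).continuous.tendsto (A y)).comp (hGen.2 y)).congr' ?_
  filter_upwards [self_mem_nhdsWithin] with h hh
  simp only [Function.comp_apply, ContinuousLinearMap.map_smul_of_tower, map_sub,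
    S.T_apply_comm hh.out.le ht]

theorem T_mem_domain (hGen : S.IsGenerator A) {t : ℝ} (ht : 0 ≤ t) (y : A.domain) :
    ∃ hm : S.T t (y : X) ∈ A.domain, A ⟨S.T t (y : X), hm⟩ = S.T t (A y) := by
  have hlim := hGen.tendsto_slope_T_apply ht y
  have hm : S.T t (y : X) ∈ A.domain := (hGen.1 _).2 ⟨_, hlim⟩
  exact ⟨hm, tendsto_nhds_unique (hGen.2 ⟨_, hm⟩) hlim⟩

theorem T_comm_resolvent (hGen : S.IsGenerator A) (hRl : IsResolventAt A lam Rl) {t : ℝ}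
    (ht : 0 ≤ t) (x : X) :
    S.T t (Rl x) = Rl (S.T t x) := by
  obtain ⟨hy, hAy⟩ := hRl.1 x
  obtain ⟨hm, hA⟩ := hGen.T_mem_domain ht ⟨Rl x, hy⟩
  have hsub : lam • S.T t (Rl x) - A ⟨S.T t (Rl x), hm⟩ = S.T t x := by
    rw [hA, ← map_smul, ← map_sub, hAy]
  rw [← hsub]
  exact (hRl.2 ⟨_, hm⟩).symm

theorem hasDerivWithinAt_T_apply (hGen : S.IsGenerator A) {t : ℝ} (ht : 0 ≤ t) (y : A.domain) :
    HasDerivWithinAt (fun r : ℝ => S.T r (y : X)) (S.T t (A y)) (Ioi t) t := by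
  rw [hasDerivWithinAt_iff_tendsto_slope, sdiff_singleton_eq_self self_notMem_Ioi]
  have hshift : Tendsto (fun r : ℝ => r - t) (𝓝[>] t) (𝓝[>] 0) := by
    refine tendsto_nhdsWithin_of_tendsto_nhds_of_eventually_within _ ?_ ?_
    · simpa using (continuous_sub_right t).tendsto t |>.mono_left nhdsWithin_le_nhds
    · filter_upwards [self_mem_nhdsWithin] with r hr using sub_pos.2 hr.out
  refine ((hGen.tendsto_slope_T_apply ht y).comp hshift).congr' ?_
  filter_upwards [self_mem_nhdsWithin] with r hr
  have hrt : 0 ≤ r - t := sub_nonneg.2 (le_of_lt hr)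
  have hsplit : S.T r (y : X) = S.T (r - t) (S.T t (y : X)) := by
    rw [← ContinuousLinearMap.comp_apply, ← S.T_add _ _ hrt ht, sub_add_cancel]
  simp only [Function.comp_apply, slope_def_module, hsplit]

theorem hasDerivWithinAt_exp_smul_T_resolvent (hGen : S.IsGenerator A)
    (hRl : IsResolventAt A lam Rl) {t : ℝ} (ht : 0 ≤ t) (x : X) :
    HasDerivWithinAt (fun r : ℝ => Complex.exp (-(lam * r)) • S.T r (Rl x))
      (-(Complex.exp (-(lam * t)) • S.T t x)) (Ioi t) t := by
  obtain ⟨hy, hAy⟩ := hRl.1 x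
  have hexp : HasDerivAt (fun r : ℝ => Complex.exp (-(lam * r)))
      (Complex.exp (-(lam * t)) * -(lam * 1)) t :=
    ((hasDerivAt_id t).ofReal_comp.const_mul lam).neg.cexp
  refine (hexp.hasDerivWithinAt.smul
    (hGen.hasDerivWithinAt_T_apply ht ⟨Rl x, hy⟩)).congr_deriv ?_
  rw [show A ⟨Rl x, hy⟩ = lam • Rl x - x from
    (sub_sub_cancel _ _).symm.trans (congrArg _ hAy), map_sub, map_smul]
  module

theorem resolvent_T_mul_exp (hGen : S.IsGenerator A) (hRl : IsResolventAt A lam Rl) {τ : ℝ}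
    (hτ : 0 ≤ τ) (x : X) (xs : X →L[ℂ] ℂ) :
    xs (Rl (S.T τ x)) * Complex.exp (-(lam * τ))
      = xs (Rl x) - ∫ r in (0 : ℝ)..τ, Complex.exp (-(lam * r)) * xs (S.T r x) := by
  have hcont : ∀ v : X,
      ContinuousOn (fun r : ℝ => Complex.exp (-(lam * r)) • S.T r v) (Icc 0 τ) :=
    fun v => (by fun_prop : Continuous fun r : ℝ => Complex.exp (-(lam * r))).continuousOn.smul
      ((S.T_cont v).mono Icc_subset_Ici_self)
  have hFTC := intervalIntegral.integral_eq_sub_of_hasDeriv_right_of_le hτ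
    (xs.continuous.comp_continuousOn (hcont (Rl x)))
    (fun t ht => (xs.restrictScalars ℝ).hasFDerivAt.comp_hasDerivWithinAt t
      (hGen.hasDerivWithinAt_exp_smul_T_resolvent hRl ht.1.le x))
    (ContinuousOn.intervalIntegrable_of_Icc hτ (by have := hcont x; fun_prop))
  simp only [Function.comp_apply, ContinuousLinearMap.coe_restrictScalars', map_neg, map_smul,
    smul_eq_mul, intervalIntegral.integral_neg, Complex.ofReal_zero, mul_zero, neg_zero,
    Complex.exp_zero, one_mul, S.T_zero, one_apply_eq_self, hGen.T_comm_resolvent hRl hτ] at hFTC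
  linear_combination -hFTC

end IsGenerator

end C0Semigroup

open scoped FourierTransform

theorem fourierInvI_eq_fourierInv (f : ℝ → X) (s : ℝ) :
    fourierInvI f s = (2 * π)⁻¹ • 𝓕⁻ f ((2 * π)⁻¹ * s) := by
  rw [fourierInvI, Real.fourierInv_eq']
  congr 1
  refine integral_congr_ae (.of_forall fun v => ?_)
  simp only [RCLike.inner_apply, conj_trivial]
  congr 2
  push_cast
  field_simp

namespace SchwartzMap

theorem integrable_fourierInvI (Φ : 𝓢(ℝ, X)) : Integrable (fourierInvI (Φ : ℝ → X)) := by
  simp_rw [funext (fourierInvI_eq_fourierInv (Φ : ℝ → X)), ← fourierInv_coe]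
  exact ((𝓕⁻ Φ).integrable.comp_mul_left' (by positivity)).smul _

theorem integral_exp_smul_fourierInvI [CompleteSpace X] (Φ : 𝓢(ℝ, X)) (r : ℝ) :
    ∫ s : ℝ, Complex.exp (-(Complex.I * (s : ℂ) * (r : ℂ))) • fourierInvI (Φ : ℝ → X) s
      = Φ r := by
  have h2π : (0 : ℝ) < 2 * π := by positivity
  let g : ℝ → X := fun w => Complex.exp (↑(-2 * π * w * r) * Complex.I) • 𝓕⁻ Φ w
  have hg : ∀ s : ℝ, Complex.exp (-(Complex.I * (s : ℂ) * (r : ℂ))) • fourierInvI (Φ : ℝ → X) s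
      = (2 * π)⁻¹ • g ((2 * π)⁻¹ * s) := by
    intro s
    rw [fourierInvI_eq_fourierInv, ← fourierInv_coe, smul_comm]
    congr 3
    push_cast
    field_simp
  simp_rw [hg, integral_smul, Measure.integral_comp_mul_left g, inv_inv, abs_of_pos h2π,
    smul_smul, inv_mul_cancel₀ h2π.ne', one_smul, g, ← Real.fourier_real_eq_integral_exp_smul,
    ← fourier_coe, FourierTransform.fourier_fourierInv_eq]

end SchwartzMap

section FourierPairing

variable {a b : ℝ} {g φ : ℝ → ℂ}

theorem integrable_exp_mul_mul_prod (hg : IntegrableOn g (Ioc a b)) (hφ : Integrable φ) :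
    Integrable
      (fun p : ℝ × ℝ => Complex.exp (-(Complex.I * (p.1 : ℂ) * (p.2 : ℂ))) * g p.2 * φ p.1)
      (volume.prod (volume.restrict (Ioc a b))) := by
  have hexp : Continuous fun p : ℝ × ℝ => Complex.exp (-(Complex.I * (p.1 : ℂ) * (p.2 : ℂ))) :=
    by fun_prop
  refine ((hφ.mul_prod hg).bdd_mul hexp.aestronglyMeasurable (c := 1)
    (.of_forall fun p => ?_)).congr (.of_forall fun p => by simp only; ring)
  rw [Complex.norm_exp]
  simp

theorem integrable_intervalIntegral_exp_mul_mul (hab : a ≤ b) (hg : IntegrableOn g (Ioc a b))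
    (hφ : Integrable φ) :
    Integrable fun s : ℝ =>
      (∫ r in a..b, Complex.exp (-(Complex.I * (s : ℂ) * (r : ℂ))) * g r) * φ s := by
  simp_rw [intervalIntegral.integral_of_le hab, ← integral_mul_const]
  exact (integrable_exp_mul_mul_prod hg hφ).integral_prod_left

theorem integral_intervalIntegral_exp_mul_mul (hab : a ≤ b) (hg : IntegrableOn g (Ioc a b))
    (hφ : Integrable φ) :
    ∫ s : ℝ, (∫ r in a..b, Complex.exp (-(Complex.I * (s : ℂ) * (r : ℂ))) * g r) * φ s
      = ∫ r in a..b, g r * ∫ s : ℝ, Complex.exp (-(Complex.I * (s : ℂ) * (r : ℂ))) * φ s := by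
  simp_rw [intervalIntegral.integral_of_le hab, ← integral_mul_const, ← integral_const_mul]
  rw [integral_integral_swap (integrable_exp_mul_mul_prod hg hφ)]
  refine integral_congr_ae (.of_forall fun r => integral_congr_ae (.of_forall fun s => ?_))
  simp only
  ring

end FourierPairing

theorem rcheck_shift_identity_general
    {X : Type*} [NormedAddCommGroup X] [NormedSpace ℂ X]
    (S : C0Semigroup X) (A : X →ₗ.[ℂ] X) (hGen : S.IsGenerator A)
    (R : ℝ → X →L[ℂ] X) (hR : ∀ s : ℝ, IsResolventAt A (Complex.I * (s : ℂ)) (R s))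
    (hRbdd : ∃ C : ℝ, ∀ s : ℝ, ‖R s‖ ≤ C) :
    ∀ (τ : ℝ), 0 < τ → ∀ (x : X) (xs : X →L[ℂ] ℂ) (Φ : SchwartzMap ℝ ℂ),
      ∫ s : ℝ, xs (R s (S.T τ x)) * Complex.exp (-(Complex.I * (s : ℂ) * (τ : ℂ))) *
          fourierInvI (fun u => Φ u) s
        = (∫ s : ℝ, xs (R s x) * fourierInvI (fun u => Φ u) s)
          - ∫ r in (0:ℝ)..τ, xs (S.T r x) * Φ r := by
  intro τ hτ x xs Φ
  obtain ⟨C, hC⟩ := hRbdd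
  have hφ : Integrable (fourierInvI (fun u => Φ u)) := Φ.integrable_fourierInvI
  have hRx : Integrable fun s => xs (R s x) * fourierInvI (fun u => Φ u) s :=
    hφ.bdd_mul (xs.continuous.comp (continuous_resolvent_apply hR hC x)).aestronglyMeasurable
      (.of_forall fun s => xs.le_opNorm_of_le ((R s).le_of_opNorm_le (hC s) x))
  have hTx : IntegrableOn (fun r => xs (S.T r x)) (Ioc 0 τ) :=
    ((xs.continuous.comp_continuousOn ((S.T_cont x).mono Icc_subset_Ici_self)).integrableOn_Icc
      ).mono_set Ioc_subset_Icc_self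
  simp_rw [hGen.resolvent_T_mul_exp (hR _) hτ.le, sub_mul]
  rw [integral_sub hRx (integrable_intervalIntegral_exp_mul_mul hτ.le hTx hφ),
    integral_intervalIntegral_exp_mul_mul hτ.le hTx hφ]
  simp_rw [← smul_eq_mul (Complex.exp _), Φ.integral_exp_smul_fourierInvI]

/-- Lemma 2.4/`l1`: the distributional identity
`ř₀(t-τ, T_τ x, x*) = ř₀(t, x, x*) - ⟨x*, T_t x⟩ χ_{[0,τ]}(t)`, expressed by pairing with
an arbitrary Schwartz function `Φ`; the left-hand side pairing is
`⟨ř₀(·-τ, T_τ x, x*), Φ⟩ = ∫ ⟨x*, R(is)T_τ x⟩ e^{-isτ} Φˇ(s) ds`. -/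
theorem rcheck_shift_identity
    {X : Type*} [NormedAddCommGroup X] [NormedSpace ℂ X] [CompleteSpace X]
    (S : C0Semigroup X) (A : X →ₗ.[ℂ] X) (hGen : S.IsGenerator A)
    (R : ℝ → X →L[ℂ] X) (hR : ∀ s : ℝ, IsResolventAt A (Complex.I * (s : ℂ)) (R s))
    (hRbdd : ∃ C : ℝ, ∀ s : ℝ, ‖R s‖ ≤ C) :
    ∀ (τ : ℝ), 0 < τ → ∀ (x : X) (xs : X →L[ℂ] ℂ) (Φ : SchwartzMap ℝ ℂ),
      ∫ s : ℝ, xs (R s (S.T τ x)) * Complex.exp (-(Complex.I * (s : ℂ) * (τ : ℂ))) *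
          fourierInvI (fun u => Φ u) s
        = (∫ s : ℝ, xs (R s x) * fourierInvI (fun u => Φ u) s)
          - ∫ r in (0:ℝ)..τ, xs (S.T r x) * Φ r :=
  rcheck_shift_identity_general S A hGen R hR hRbdd
end
end

section
/- Let T be a strongly continuous semigroup on a complex Banach space X with generator A, and let ρ₀ > 0 be such that the strip {λ : |Re λ| < ρ₀} lies in ρ(A) and sup{‖R(is+ρ)‖ : s ∈ ℝ, |ρ| < ρ₀} < ∞. Then for every ρ with |ρ| < ρ₀ and all x ∈ X, x* ∈ X*, one has ř₀(t, x, x*) = e^{ρt} ř_ρ(t, x, x*) as tempered distributions in t; equivalently ⟨ř_ρ, Φ⟩ = ⟨ř₀, e^{−ρ·}Φ⟩ for every compactly supported Schwartz function Φ. -/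
open MeasureTheory Complex Filter Topology Set
open scoped ENNReal NNReal Real

noncomputable section

variable {X : Type*} [NormedAddCommGroup X] [NormedSpace ℂ X]

/-!
Write `Φˇ(s) = (2π)⁻¹ ψ(is)` with `ψ(z) = ∫ Φ(u) e^{uz} du`; then
`(e^{-ρ·}Φ)ˇ(s) = (2π)⁻¹ ψ(is - ρ)`, so both sides are `(2π)⁻¹` times integrals of
`g(w) = ⟨x*, R(w)x⟩ ψ(w - ρ)` along the vertical lines `Re w = ρ` and `Re w = 0`.
By the resolvent identity `g` is holomorphic on the strip; `R` is bounded there and two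
integrations by parts give `|ψ(z)| ≲ (1 + (Im z)²)⁻¹` on vertical strips, so Cauchy's theorem
on the rectangles `[0, ρ] × [-T, T]`, `T → ∞`, identifies the two integrals.
-/

open scoped Interval

theorem integral_vertical_line_eq {E : Type*} [NormedAddCommGroup E] [NormedSpace ℂ E]
    {g : ℂ → E} {a b : ℝ} {φ : ℝ → ℝ} (hg : DifferentiableOn ℂ g (re ⁻¹' [[a, b]]))
    (hgφ : ∀ z : ℂ, z.re ∈ [[a, b]] → ‖g z‖ ≤ φ z.im) (hφ : Integrable φ)
    (hφ_lim : Tendsto φ (cocompact ℝ) (𝓝 0)) :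
    ∫ y : ℝ, g (a + y * I) = ∫ y : ℝ, g (b + y * I) := by
  have hline : ∀ c ∈ [[a, b]], Integrable fun y : ℝ => g (c + y * I) := by
    intro c hc
    have hcont : Continuous fun y : ℝ => g (c + y * I) :=
      hg.continuousOn.comp_continuous (by fun_prop) fun y => by simpa using hc
    exact hφ.mono' hcont.aestronglyMeasurable
      (Eventually.of_forall fun y => by simpa using hgφ (c + y * I) (by simpa using hc))
  have hvertical (c : ℝ) (hc : c ∈ [[a, b]]) :
      Tendsto (fun T : ℝ => ∫ y in -T..T, g (c + y * I)) atTop (𝓝 (∫ y : ℝ, g (c + y * I))) :=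
    intervalIntegral_tendsto_integral (hline c hc) tendsto_neg_atTop_atBot tendsto_id
  have hhorizontal :
      Tendsto (fun y : ℝ => ∫ x in a..b, g (x + y * I)) (cocompact ℝ) (𝓝 0) := by
    refine squeeze_zero_norm' (Eventually.of_forall fun y => ?_)
      (by simpa using hφ_lim.mul_const |b - a|)
    refine intervalIntegral.norm_integral_le_of_norm_le_const fun x hx => ?_
    simpa using hgφ (x + y * I) (by simpa using uIoc_subset_uIcc hx)
  have hrect (T : ℝ) : ((∫ x in a..b, g (x + (-T : ℝ) * I)) - ∫ x in a..b, g (x + T * I)) +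
      I • ((∫ y in -T..T, g (b + y * I)) - ∫ y in -T..T, g (a + y * I)) = 0 := by
    rw [smul_sub, ← integral_boundary_rect_eq_zero_of_differentiableOn g ⟨a, -T⟩ ⟨b, T⟩
      (hg.mono fun z hz => hz.1)]
    simp only
    abel
  have hlim := ((hhorizontal.comp (tendsto_neg_atTop_atBot.mono_right atBot_le_cocompact)).sub
    (hhorizontal.mono_left atTop_le_cocompact)).add
    (((hvertical b right_mem_uIcc).sub (hvertical a left_mem_uIcc)).const_smul I)
  have := tendsto_nhds_unique hlim (tendsto_const_nhds.congr fun T => (hrect T).symm)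
  rw [sub_zero, zero_add, smul_eq_zero] at this
  exact (sub_eq_zero.mp (this.resolve_left I_ne_zero)).symm

theorem tendsto_inv_one_add_sq_cocompact :
    Tendsto (fun y : ℝ => (1 + y ^ 2)⁻¹) (cocompact ℝ) (𝓝 0) := by
  have hsq : Tendsto (fun y : ℝ => y ^ 2) (cocompact ℝ) atTop := by
    simpa [Function.comp_def] using
      (tendsto_pow_atTop two_ne_zero).comp (tendsto_norm_cocompact_atTop (E := ℝ))
  exact (tendsto_atTop_add_const_left _ 1 hsq).inv_tendsto_atTop

section Resolvent

variable {A : X →ₗ.[ℂ] X}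

theorem IsResolventAt.sub_eq {z w : ℂ} {Rz Rw : X →L[ℂ] X} (hz : IsResolventAt A z Rz)
    (hw : IsResolventAt A w Rw) : Rw - Rz = (z - w) • Rz ∘L Rw := by
  ext y
  obtain ⟨hmem, hy⟩ := hw.1 y
  have h : Rz (z • Rw y - A ⟨Rw y, hmem⟩) = Rw y := hz.2 ⟨Rw y, hmem⟩
  have hsplit : z • Rw y - A ⟨Rw y, hmem⟩ = (z - w) • Rw y + y := calc
    _ = (z - w) • Rw y + (w • Rw y - A ⟨Rw y, hmem⟩) := by rw [sub_smul]; abel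
    _ = _ := congrArg ((z - w) • Rw y + ·) hy
  rw [hsplit, map_add, map_smul] at h
  exact sub_eq_iff_eq_add.mpr h.symm

theorem IsResolventAt.eventually_norm_le {R : ℂ → X →L[ℂ] X} {z : ℂ}
    (hR : ∀ᶠ w in 𝓝 z, IsResolventAt A w (R w)) : ∀ᶠ w in 𝓝 z, ‖R w‖ ≤ 2 * ‖R z‖ := by
  have hsmall : ∀ᶠ w in 𝓝 z, ‖z - w‖ * ‖R z‖ ≤ 1 / 2 := by
    have hcont : Continuous fun w => ‖z - w‖ * ‖R z‖ := by fun_prop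
    have hlim : Tendsto (fun w => ‖z - w‖ * ‖R z‖) (𝓝 z) (𝓝 0) := by
      simpa using hcont.tendsto z
    exact hlim.eventually (ge_mem_nhds (by norm_num))
  filter_upwards [hR, hsmall] with w hw hsmall
  have hle : ‖R w‖ ≤ ‖R z‖ + ‖z - w‖ * ‖R z‖ * ‖R w‖ := calc
    ‖R w‖ = ‖R z + (z - w) • R z ∘L R w‖ := by rw [← hR.self_of_nhds.sub_eq hw, add_sub_cancel]
    _ ≤ ‖R z‖ + ‖z - w‖ * (‖R z‖ * ‖R w‖) := by
      grw [norm_add_le, norm_smul, ContinuousLinearMap.opNorm_comp_le]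
    _ = _ := by ring
  nlinarith [norm_nonneg (R w)]

theorem IsResolventAt.hasDerivAt {R : ℂ → X →L[ℂ] X} {z : ℂ}
    (hR : ∀ᶠ w in 𝓝 z, IsResolventAt A w (R w)) : HasDerivAt R (-(R z ∘L R z)) z := by
  have hRz := hR.self_of_nhds
  have hcont : Tendsto R (𝓝 z) (𝓝 (R z)) := by
    rw [tendsto_iff_norm_sub_tendsto_zero]
    have hbound : Continuous fun w => ‖R z‖ * (2 * ‖R z‖) * ‖z - w‖ := by fun_prop
    refine squeeze_zero' (Eventually.of_forall fun _ => norm_nonneg _) ?_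
      (by simpa using hbound.tendsto z)
    filter_upwards [hR, IsResolventAt.eventually_norm_le hR] with w hw hRw
    rw [hRz.sub_eq hw]
    calc ‖(z - w) • R z ∘L R w‖ ≤ ‖z - w‖ * (‖R z‖ * ‖R w‖) := by
          grw [norm_smul, ContinuousLinearMap.opNorm_comp_le]
      _ ≤ ‖z - w‖ * (‖R z‖ * (2 * ‖R z‖)) := by gcongr
      _ = ‖R z‖ * (2 * ‖R z‖) * ‖z - w‖ := by ring
  have hslope : ∀ᶠ w in 𝓝[≠] z, -(R z ∘L R w) = slope R z w := by
    filter_upwards [self_mem_nhdsWithin, nhdsWithin_le_nhds hR] with w hne hw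
    rw [slope_def_module, hRz.sub_eq hw, smul_smul, ← neg_sub w z, mul_neg,
      inv_mul_cancel₀ (sub_ne_zero.mpr hne), neg_smul, one_smul]
  rw [hasDerivAt_iff_tendsto_slope]
  refine Tendsto.congr' hslope (Tendsto.neg ?_)
  exact (((ContinuousLinearMap.compL ℂ X X X) (R z)).continuous.tendsto _).comp
    (hcont.mono_left nhdsWithin_le_nhds)

theorem IsResolventAt.differentiableOn {R : ℂ → X →L[ℂ] X} {U : Set ℂ} (hU : IsOpen U)
    (hR : ∀ w ∈ U, IsResolventAt A w (R w)) : DifferentiableOn ℂ R U := fun _z hz =>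
  (IsResolventAt.hasDerivAt (eventually_of_mem (hU.mem_nhds hz) hR)).differentiableAt
    |>.differentiableWithinAt

end Resolvent

/-- The bilateral Laplace transform of `f` at `-z`. -/
def expTransform (f : ℝ → ℂ) (z : ℂ) : ℂ := ∫ u : ℝ, f u * cexp (u * z)

theorem fourierInvI_eq_expTransform (f : ℝ → ℂ) (s : ℝ) :
    fourierInvI f s = (2 * π)⁻¹ • expTransform f (I * s) := by
  rw [fourierInvI, expTransform]
  congr 2 with u
  rw [smul_eq_mul, mul_comm]
  ring_nf

theorem expTransform_cexp_mul (f : ℝ → ℂ) (c z : ℂ) :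
    expTransform (fun u => cexp (c * u) * f u) z = expTransform f (z + c) := by
  rw [expTransform, expTransform]
  congr 1 with u
  rw [mul_add, Complex.exp_add]
  ring_nf

section ExpTransform

variable {f : ℝ → ℂ}

theorem integrable_mul_cexp (hf : Continuous f) (hsupp : HasCompactSupport f) (z : ℂ) :
    Integrable fun u : ℝ => f u * cexp (u * z) :=
  (hf.mul (by fun_prop)).integrable_of_hasCompactSupport hsupp.mul_right

theorem norm_cexp_ofReal_mul_le {u : ℝ} {z : ℂ} {c : ℝ} (hz : |z.re| ≤ c) :
    ‖cexp (u * z)‖ ≤ Real.exp (|u| * c) := by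
  rw [norm_exp, re_ofReal_mul, Real.exp_le_exp]
  calc u * z.re ≤ |u| * |z.re| := (le_abs_self _).trans (abs_mul _ _).le
    _ ≤ |u| * c := by gcongr

theorem exists_norm_expTransform_le (hf : Continuous f) (hsupp : HasCompactSupport f) (c : ℝ) :
    ∃ K, ∀ z : ℂ, |z.re| ≤ c → ‖expTransform f z‖ ≤ K := by
  have hbound : Integrable fun u : ℝ => ‖f u‖ * Real.exp (|u| * c) :=
    (hf.norm.mul (by fun_prop)).integrable_of_hasCompactSupport hsupp.norm.mul_right
  refine ⟨∫ u, ‖f u‖ * Real.exp (|u| * c), fun z hz => ?_⟩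
  refine norm_integral_le_of_norm_le hbound (Eventually.of_forall fun u => ?_)
  rw [norm_mul]
  gcongr
  exact norm_cexp_ofReal_mul_le hz

theorem expTransform_deriv (hf : ContDiff ℝ 1 f) (hsupp : HasCompactSupport f) (z : ℂ) :
    expTransform (deriv f) z = -z * expTransform f z := by
  have hexp (u : ℝ) : HasDerivAt (fun v : ℝ => cexp (v * z)) (cexp (u * z) * z) u := by
    simpa using (((hasDerivAt_id (u : ℂ)).mul_const z).cexp).comp_ofReal
  have hparts := integral_mul_deriv_eq_deriv_mul_of_integrable (u := f)
    (fun u _ => (hf.differentiable one_ne_zero u).hasDerivAt) (fun u _ => hexp u)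
    (by convert (integrable_mul_cexp hf.continuous hsupp z).mul_const z using 1
        ext u; simp [mul_assoc])
    (integrable_mul_cexp (hf.continuous_deriv le_rfl) hsupp.deriv z)
    (integrable_mul_cexp hf.continuous hsupp z)
  have hz : ∫ u : ℝ, f u * (cexp (u * z) * z) = z * expTransform f z := by
    rw [expTransform, ← integral_const_mul]
    congr 1 with u
    ring
  rw [hz] at hparts
  rw [expTransform]
  linear_combination hparts

theorem exists_norm_expTransform_le_mul_inv_one_add_sq (hf : ContDiff ℝ 2 f)
    (hsupp : HasCompactSupport f) (c : ℝ) :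
    ∃ B, ∀ z : ℂ, |z.re| ≤ c → ‖expTransform f z‖ ≤ B * (1 + z.im ^ 2)⁻¹ := by
  have hf' : ContDiff ℝ 1 (deriv f) := (show ContDiff ℝ (1 + 1) f from hf).deriv'
  obtain ⟨K₀, hK₀⟩ := exists_norm_expTransform_le hf.continuous hsupp c
  obtain ⟨K₂, hK₂⟩ :=
    exists_norm_expTransform_le (hf'.continuous_deriv le_rfl) hsupp.deriv.deriv c
  refine ⟨K₀ + K₂, fun z hz => ?_⟩
  have hsq : expTransform (deriv (deriv f)) z = z ^ 2 * expTransform f z := by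
    rw [expTransform_deriv hf' hsupp.deriv, expTransform_deriv (hf.of_le one_le_two) hsupp]
    ring
  have him : z.im ^ 2 ≤ ‖z‖ ^ 2 := by
    simpa [sq_abs] using pow_le_pow_left₀ (abs_nonneg z.im) (abs_im_le_norm z) 2
  rw [← div_eq_mul_inv, le_div_iff₀ (by positivity)]
  calc ‖expTransform f z‖ * (1 + z.im ^ 2)
      ≤ ‖expTransform f z‖ + ‖z‖ ^ 2 * ‖expTransform f z‖ := by
        nlinarith [norm_nonneg (expTransform f z)]
    _ = ‖expTransform f z‖ + ‖expTransform (deriv (deriv f)) z‖ := by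
        rw [hsq, norm_mul, norm_pow]
    _ ≤ K₀ + K₂ := add_le_add (hK₀ z hz) (hK₂ z hz)

theorem differentiable_expTransform (hf : Continuous f) (hsupp : HasCompactSupport f) :
    Differentiable ℂ (expTransform f) := fun z => by
  set c := |z.re| + 1
  have hderiv (u : ℝ) (w : ℂ) :
      HasDerivAt (fun w : ℂ => f u * cexp (u * w)) (f u * (cexp (u * w) * u)) w := by
    simpa [mul_comm] using (((hasDerivAt_id w).const_mul (u : ℂ)).cexp).const_mul (f u)
  have hbound : Integrable fun u : ℝ => ‖f u‖ * (Real.exp (|u| * c) * |u|) :=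
    (hf.norm.mul (by fun_prop)).integrable_of_hasCompactSupport hsupp.norm.mul_right
  refine (hasDerivAt_integral_of_dominated_loc_of_deriv_le (Metric.ball_mem_nhds z one_pos)
    (Eventually.of_forall fun w => (integrable_mul_cexp hf hsupp w).aestronglyMeasurable)
    (integrable_mul_cexp hf hsupp z) (F' := fun w u => f u * (cexp (u * w) * u))
    (hf.mul (by fun_prop)).aestronglyMeasurable ?_ hbound ?_).2.differentiableAt
  · refine Eventually.of_forall fun u w hw => ?_
    have hw : |w.re| ≤ c := by
      have := (abs_re_le_norm (w - z)).trans (mem_ball_iff_norm.mp hw).le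
      rw [sub_re] at this
      linarith [abs_sub_abs_le_abs_sub w.re z.re]
    rw [norm_mul, norm_mul, norm_real, Real.norm_eq_abs]
    gcongr
    exact norm_cexp_ofReal_mul_le hw
  · exact Eventually.of_forall fun u w _ => hderiv u w

end ExpTransform

theorem integral_mul_fourierInvI_shift {r : ℂ → ℂ} {ρ C : ℝ}
    (hr : DifferentiableOn ℂ r (re ⁻¹' [[0, ρ]])) (hrC : ∀ z : ℂ, z.re ∈ [[0, ρ]] → ‖r z‖ ≤ C)
    {Φ : ℝ → ℂ} (hΦ : ContDiff ℝ 2 Φ) (hsupp : HasCompactSupport Φ) :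
    ∫ s : ℝ, r (I * s + ρ) * fourierInvI Φ s =
      ∫ s : ℝ, r (I * s) * fourierInvI (fun u : ℝ => cexp (-(ρ * u)) * Φ u) s := by
  obtain ⟨B, hB⟩ := exists_norm_expTransform_le_mul_inv_one_add_sq hΦ hsupp |ρ|
  have hψ := differentiable_expTransform hΦ.continuous hsupp
  have hg : DifferentiableOn ℂ (fun w => r w * expTransform Φ (w - ρ)) (re ⁻¹' [[0, ρ]]) :=
    hr.mul (hψ.comp (differentiable_id.sub_const _)).differentiableOn
  have hgφ (z : ℂ) (hz : z.re ∈ [[0, ρ]]) :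
      ‖r z * expTransform Φ (z - ρ)‖ ≤ C * B * (1 + z.im ^ 2)⁻¹ := by
    have hψz : ‖expTransform Φ (z - ρ)‖ ≤ B * (1 + z.im ^ 2)⁻¹ := by
      simpa using hB (z - ρ) (by simpa [abs_sub_comm] using abs_sub_right_of_mem_uIcc hz)
    rw [norm_mul, mul_assoc]
    exact mul_le_mul (hrC z hz) hψz (norm_nonneg _) ((norm_nonneg _).trans (hrC z hz))
  have key := integral_vertical_line_eq hg hgφ (integrable_inv_one_add_sq.const_mul _)
    (by simpa using tendsto_inv_one_add_sq_cocompact.const_mul (C * B))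
  simp only [ofReal_zero, zero_add, add_sub_cancel_left] at key
  simp only [fourierInvI_eq_expTransform, ← neg_mul, expTransform_cexp_mul, mul_smul_comm,
    integral_smul, mul_comm I, add_comm _ (ρ : ℂ), ← sub_eq_add_neg]
  rw [key]

theorem rcheck_exponential_shift_general
    {X : Type*} [NormedAddCommGroup X] [NormedSpace ℂ X]
    (A : X →ₗ.[ℂ] X)
    (ρ₀ : ℝ)
    (R : ℂ → X →L[ℂ] X)
    (hR : ∀ lam : ℂ, |lam.re| < ρ₀ → IsResolventAt A lam (R lam))
    (hRbdd : ∃ C : ℝ, ∀ lam : ℂ, |lam.re| < ρ₀ → ‖R lam‖ ≤ C) :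
    ∀ (ρ : ℝ), |ρ| < ρ₀ → ∀ (x : X) (xs : X →L[ℂ] ℂ) (Φ : SchwartzMap ℝ ℂ),
      HasCompactSupport (fun u : ℝ => Φ u) →
      ∫ s : ℝ, xs (R (Complex.I * (s : ℂ) + (ρ : ℂ)) x) * fourierInvI (fun u => Φ u) s
        = ∫ s : ℝ, xs (R (Complex.I * (s : ℂ)) x) *
            fourierInvI (fun u : ℝ => Complex.exp (-((ρ : ℂ) * (u : ℂ))) * Φ u) s := by
  intro ρ hρ x xs Φ hΦ
  obtain ⟨C, hC⟩ := hRbdd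
  have hopen : IsOpen {w : ℂ | |w.re| < ρ₀} := isOpen_lt (by fun_prop) continuous_const
  have hRdiff : DifferentiableOn ℂ R {w | |w.re| < ρ₀} := IsResolventAt.differentiableOn hopen hR
  have hsub (z : ℂ) (hz : z.re ∈ [[0, ρ]]) : |z.re| < ρ₀ := by
    simpa using (abs_sub_left_of_mem_uIcc hz).trans_lt (by simpa using hρ)
  refine integral_mul_fourierInvI_shift (r := fun w => xs (R w x)) (C := ‖xs‖ * (C * ‖x‖))
    (fun z hz => ?_) (fun z hz => ?_) (Φ.smooth 2) hΦ
  · have hRz := hRdiff.differentiableAt (hopen.mem_nhds (hsub z hz))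
    exact (xs.differentiableAt.comp z (hRz.clm_apply (differentiableAt_const x)))
      |>.differentiableWithinAt
  · grw [xs.le_opNorm, (R z).le_opNorm, hC z (hsub z hz)]

/-- Lemma 2.6/`l3`: `ř₀(t) = e^{ρt} ř_ρ(t)` as tempered distributions;
equivalently `⟨ř_ρ, Φ⟩ = ⟨ř₀, e^{-ρ·}Φ⟩` for every compactly supported Schwartz `Φ`, where
`⟨řσ, Ψ⟩ = ∫ ⟨x*, R(is+σ)x⟩ Ψˇ(s) ds`. -/
theorem rcheck_exponential_shift
    {X : Type*} [NormedAddCommGroup X] [NormedSpace ℂ X] [CompleteSpace X]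
    (S : C0Semigroup X) (A : X →ₗ.[ℂ] X) (hGen : S.IsGenerator A)
    (ρ₀ : ℝ) (hρ₀ : 0 < ρ₀)
    (R : ℂ → X →L[ℂ] X)
    (hR : ∀ lam : ℂ, |lam.re| < ρ₀ → IsResolventAt A lam (R lam))
    (hRbdd : ∃ C : ℝ, ∀ lam : ℂ, |lam.re| < ρ₀ → ‖R lam‖ ≤ C) :
    ∀ (ρ : ℝ), |ρ| < ρ₀ → ∀ (x : X) (xs : X →L[ℂ] ℂ) (Φ : SchwartzMap ℝ ℂ),
      HasCompactSupport (fun u : ℝ => Φ u) →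
      ∫ s : ℝ, xs (R (Complex.I * (s : ℂ) + (ρ : ℂ)) x) * fourierInvI (fun u => Φ u) s
        = ∫ s : ℝ, xs (R (Complex.I * (s : ℂ)) x) *
            fourierInvI (fun u : ℝ => Complex.exp (-((ρ : ℂ) * (u : ℂ))) * Φ u) s :=
  rcheck_exponential_shift_general A ρ₀ R hR hRbdd
end
end

section
/- Let T be a strongly continuous semigroup on a complex Banach space X with generator A and suppose iℤ ⊂ ρ(A). Then for every k ∈ ℤ and x ∈ X, (1/2π)R(ik)(I − T_{2π})x = (1/2π)∫_0^{2π} e^{−ikt} T_t x dt, and consequently the Cesàro sum satisfies (1/2π)(C,1)∑_{k∈ℤ} R(ik)(I − T_{2π})x = (1/2)(I + T_{2π})x for every x ∈ X. -/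
open MeasureTheory Complex Filter Topology Set
open scoped ENNReal NNReal Real

noncomputable section

variable {X : Type*} [NormedAddCommGroup X] [NormedSpace ℂ X]

/-!
For `λ ∈ ρ(A)` and `τ ≥ 0`, the rescaled semigroup `e^{-λt} T_t` is generated by `A - λ`, so the
integral `y = ∫_0^τ e^{-λt} T_t x dt` lies in the domain of `A` with
`(λ - A) y = x - e^{-λτ} T_τ x`. For `λ = ik` and `τ = 2π` the exponential factor is `1`, so
`(2π)⁻¹ R(ik)(I - T_{2π})x` is the `k`-th Fourier coefficient of the orbit `t ↦ T_t x` on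
`[0, 2π]`. The Cesàro means of Fourier coefficients are integrals against the Fejér kernel, a
nonnegative approximate identity that is symmetric about `π`; the orbit is continuous on
`[0, 2π]`, but its `2π`-periodic extension jumps at `0`, so the means converge to the average
`(x + T_{2π} x) / 2` of the two one-sided limits.
-/

namespace Finset

variable {M : Type*} [AddCommGroup M]

theorem sum_Icc_neg_natCast_succ (f : ℤ → M) (n : ℕ) :
    ∑ k ∈ Icc (-((n + 1 : ℕ) : ℤ)) ((n + 1 : ℕ) : ℤ), f k
      = f (-((n : ℤ) + 1)) + ∑ k ∈ Icc (-(n : ℤ)) n, f k + f (n + 1) := by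
  have hIcc : Icc (-((n + 1 : ℕ) : ℤ)) ((n + 1 : ℕ) : ℤ)
      = insert (-((n : ℤ) + 1)) (insert ((n : ℤ) + 1) (Icc (-(n : ℤ)) n)) := by
    ext m; simp only [mem_Icc, mem_insert]; omega
  rw [hIcc, sum_insert (by simp only [mem_insert, mem_Icc]; omega),
    sum_insert (by simp only [mem_Icc]; omega)]
  abel

theorem sum_Icc_neg_natCast_eq_sum_range (f : ℤ → M) (n : ℕ) :
    ∑ k ∈ Icc (-(n : ℤ)) n, f k
      = ∑ i ∈ range n, f (i - n) + f 0 + ∑ j ∈ range n, f (n - j) := by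
  induction n with
  | zero => simp
  | succ n ih =>
    rw [sum_Icc_neg_natCast_succ, ih, sum_range_succ', sum_range_succ' (fun j => f _)]
    push_cast
    simp only [add_sub_add_right_eq_sub, zero_sub, sub_zero]
    abel

theorem sum_range_sum_range_sub (f : ℤ → M) (n : ℕ) :
    ∑ i ∈ range n, ∑ j ∈ range n, f (i - j)
      = ∑ k ∈ Icc (-(n : ℤ)) n, ((n : ℤ) - k.natAbs) • f k := by
  induction n with
  | zero => simp
  | succ n ih =>
    have hstep : ∀ k ∈ Icc (-(n : ℤ)) n,
        (((n + 1 : ℕ) : ℤ) - k.natAbs) • f k = ((n : ℤ) - k.natAbs) • f k + f k := by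
      intro k _; push_cast; rw [add_sub_right_comm, add_smul, one_smul]
    rw [sum_Icc_neg_natCast_succ, sum_congr rfl hstep, sum_add_distrib, ← ih,
      sum_Icc_neg_natCast_eq_sum_range, sum_range_succ, sum_range_succ]
    simp only [sum_range_succ, sum_add_distrib, sub_self, Int.natAbs_neg,
      show ((n : ℤ) + 1).natAbs = n + 1 by omega, zero_smul]
    abel

end Finset

open ComplexConjugate

/-- Normalized so that its Fourier coefficients are the Cesàro weights `1 - |k| / N`. -/
def fejerKernel (N : ℕ) (t : ℝ) : ℝ :=
  (N : ℝ)⁻¹ * ‖∑ j ∈ Finset.range N, exp (-(I * j * t))‖ ^ 2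

theorem fejerKernel_nonneg (N : ℕ) (t : ℝ) : 0 ≤ fejerKernel N t := by
  unfold fejerKernel; positivity

theorem continuous_fejerKernel (N : ℕ) : Continuous (fejerKernel N) := by
  unfold fejerKernel; fun_prop

theorem exp_neg_I_mul_intCast_mul_two_pi (k : ℤ) : exp (-(I * k * (2 * π : ℝ))) = 1 := by
  rw [show -(I * k * (2 * π : ℝ)) = ((-k : ℤ) : ℂ) * (2 * π * I) by push_cast; ring]
  exact exp_int_mul_two_pi_mul_I (-k)

theorem fejerKernel_two_pi_sub (N : ℕ) (t : ℝ) : fejerKernel N (2 * π - t) = fejerKernel N t := by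
  have hconj : ∀ j : ℕ, exp (-(I * j * (2 * π - t : ℝ))) = conj (exp (-(I * j * t))) := by
    intro j
    rw [← exp_conj, show -(I * j * (2 * π - t : ℝ)) = -(I * (j : ℤ) * (2 * π : ℝ)) + I * j * t by
      push_cast; ring, exp_add, exp_neg_I_mul_intCast_mul_two_pi, one_mul]
    simp [conj_ofReal]
  simp only [fejerKernel, hconj, ← map_sum, RCLike.norm_conj]

theorem ofReal_fejerKernel {N : ℕ} (hN : N ≠ 0) (t : ℝ) :
    (fejerKernel N t : ℂ) = ∑ k ∈ Finset.Icc (-(N : ℤ)) N,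
      ((1 - (k.natAbs : ℝ) / N : ℝ) : ℂ) * exp (-(I * k * t)) := by
  have hprod : ((‖∑ j ∈ Finset.range N, exp (-(I * j * t))‖ ^ 2 : ℝ) : ℂ)
      = ∑ i ∈ Finset.range N, ∑ j ∈ Finset.range N, exp (-(I * ((i - j : ℤ) : ℂ) * t)) := by
    rw [ofReal_pow, ← mul_conj', map_sum, Finset.sum_mul_sum]
    refine Finset.sum_congr rfl fun i _ => Finset.sum_congr rfl fun j _ => ?_
    rw [← exp_conj, ← exp_add]
    congr 1
    simp only [map_neg, map_mul, conj_I, conj_natCast, conj_ofReal]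
    push_cast; ring
  rw [fejerKernel, ofReal_mul, hprod,
    Finset.sum_range_sum_range_sub (fun k : ℤ => exp (-(I * k * t))), Finset.mul_sum]
  refine Finset.sum_congr rfl fun k _ => ?_
  rw [zsmul_eq_mul]
  push_cast
  field_simp
  rw [Nat.cast_natAbs]

theorem integral_exp_neg_I_mul_intCast_of_ne_zero {k : ℤ} (hk : k ≠ 0) :
    ∫ t in (0 : ℝ)..2 * π, exp (-(I * k * t)) = 0 := by
  simp only [show ∀ t : ℂ, -(I * k * t) = -(I * k) * t from fun t => by ring]
  rw [integral_exp_mul_complex (by simp [hk])]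
  simp only [neg_mul, exp_neg_I_mul_intCast_mul_two_pi, ofReal_zero, mul_zero,
    exp_zero, sub_self, zero_div]

theorem integral_fejerKernel {N : ℕ} (hN : N ≠ 0) :
    ∫ t in (0 : ℝ)..2 * π, fejerKernel N t = 2 * π := by
  apply Complex.ofReal_injective
  rw [← intervalIntegral.integral_ofReal]
  simp_rw [ofReal_fejerKernel hN]
  rw [intervalIntegral.integral_finsetSum fun k _ =>
    (by fun_prop : Continuous _).intervalIntegrable _ _, Finset.sum_eq_single 0]
  · simp
  · intro k _ hk
    rw [intervalIntegral.integral_const_mul, integral_exp_neg_I_mul_intCast_of_ne_zero hk, mul_zero]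
  · simp

theorem integral_fejerKernel_zero_pi {N : ℕ} (hN : N ≠ 0) :
    ∫ t in (0 : ℝ)..π, fejerKernel N t = π := by
  have hsymm : ∫ t in π..2 * π, fejerKernel N t = ∫ t in (0 : ℝ)..π, fejerKernel N t := by
    have := intervalIntegral.integral_comp_sub_left (fejerKernel N) (2 * π) (a := 0) (b := π)
    rw [show 2 * π - π = π by ring, sub_zero] at this
    simpa only [fejerKernel_two_pi_sub] using this.symm
  have hsplit := intervalIntegral.integral_add_adjacent_intervals
    ((continuous_fejerKernel N).intervalIntegrable (μ := volume) 0 π)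
    ((continuous_fejerKernel N).intervalIntegrable π (2 * π))
  rw [hsymm, integral_fejerKernel hN] at hsplit
  linarith

theorem fejerKernel_le (N : ℕ) {t : ℝ} (ht : Real.sin (t / 2) ≠ 0) :
    fejerKernel N t ≤ (N : ℝ)⁻¹ / Real.sin (t / 2) ^ 2 := by
  set z := exp (-(I * t)) with hz_def
  have hz : ‖z - 1‖ = 2 * |Real.sin (t / 2)| := by
    rw [hz_def, show -(I * t) = I * (-t : ℝ) by push_cast; ring, norm_exp_I_mul_ofReal_sub_one]
    simp [neg_div, Real.sin_neg]
  have hz1 : z - 1 ≠ 0 := by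
    rw [← norm_ne_zero_iff, hz]; positivity
  have hgeom : ∑ j ∈ Finset.range N, exp (-(I * j * t)) = (z ^ N - 1) / (z - 1) := by
    rw [← geom_sum_eq (sub_ne_zero.mp hz1)]
    exact Finset.sum_congr rfl fun j _ => by rw [← exp_nat_mul]; ring_nf
  have hnum : ‖z ^ N - 1‖ ≤ 2 := by
    have : ‖z‖ = 1 := by rw [norm_exp]; simp
    calc ‖z ^ N - 1‖ ≤ ‖z ^ N‖ + ‖(1 : ℂ)‖ := norm_sub_le _ _
      _ = 2 := by rw [norm_pow, this]; norm_num
  have hD : ‖∑ j ∈ Finset.range N, exp (-(I * j * t))‖ ≤ |Real.sin (t / 2)|⁻¹ := by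
    rw [hgeom, norm_div, hz, div_le_iff₀ (by positivity)]
    field_simp
    linarith
  rw [fejerKernel, div_eq_mul_inv, ← sq_abs (Real.sin _), ← inv_pow]
  gcongr

theorem tendstoUniformlyOn_fejerKernel {δ : ℝ} (hδ : 0 < δ) :
    TendstoUniformlyOn fejerKernel 0 atTop (Icc δ π) := by
  rcases lt_or_ge π δ with hπδ | hδπ
  · rw [Icc_eq_empty_of_lt hπδ]; exact tendstoUniformlyOn_empty
  have hs : 0 < Real.sin (δ / 2) := Real.sin_pos_of_pos_of_lt_pi (by positivity) (by linarith)
  have hbound : ∀ N : ℕ, ∀ t ∈ Icc δ π,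
      fejerKernel N t ≤ (N : ℝ)⁻¹ / Real.sin (δ / 2) ^ 2 := by
    intro N t ht
    have hst : Real.sin (δ / 2) ≤ Real.sin (t / 2) :=
      Real.sin_le_sin_of_le_of_le_pi_div_two (by linarith) (by linarith [ht.2]) (by linarith [ht.1])
    refine (fejerKernel_le N (hs.trans_le hst).ne').trans ?_
    gcongr
  have hlim : Tendsto (fun N : ℕ => (N : ℝ)⁻¹ / Real.sin (δ / 2) ^ 2) atTop (𝓝 0) := by
    simpa using tendsto_inv_atTop_nhds_zero_nat.div_const (Real.sin (δ / 2) ^ 2)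
  rw [Metric.tendstoUniformlyOn_iff]
  intro ε hε
  filter_upwards [hlim.eventually (gt_mem_nhds hε)] with N hN t ht
  rw [Pi.zero_apply, dist_zero_left, Real.norm_of_nonneg (fejerKernel_nonneg N t)]
  exact (hbound N t ht).trans_lt hN

section ApproximateIdentity

variable {E : Type*} [NormedAddCommGroup E] [NormedSpace ℝ E]

theorem norm_integral_smul_le_of_norm_le {K : ℝ → ℝ} {g : ℝ → E} {a b η : ℝ} (hab : a ≤ b)
    (hK : ∀ t, 0 ≤ K t) (hKi : IntervalIntegrable K volume a b)
    (hg : ∀ t ∈ Ioc a b, ‖g t‖ ≤ η) :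
    ‖∫ t in a..b, K t • g t‖ ≤ η * ∫ t in a..b, K t := by
  rw [← intervalIntegral.integral_const_mul]
  refine intervalIntegral.norm_integral_le_of_norm_le hab (ae_of_all _ fun t ht => ?_)
    (hKi.const_mul η)
  rw [norm_smul, Real.norm_of_nonneg (hK t), mul_comm]
  exact mul_le_mul_of_nonneg_right (hg t ht) (hK t)

theorem tendsto_integral_smul_of_tendstoUniformlyOn_zero {ι : Type*} {l : Filter ι}
    {K : ι → ℝ → ℝ} {g : ℝ → E} {c b M : ℝ} (hcb : c ≤ b)
    (hK : TendstoUniformlyOn K 0 l (Ioc c b)) (hg : ∀ t ∈ Ioc c b, ‖g t‖ ≤ M) :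
    Tendsto (fun i => ∫ t in c..b, K i t • g t) l (𝓝 0) := by
  have hM : 0 < M * (b - c) + 1 := by
    rcases hcb.eq_or_lt with rfl | hlt
    · simp
    · nlinarith [(norm_nonneg _).trans (hg b ⟨hlt, le_rfl⟩)]
  rw [Metric.tendsto_nhds]
  intro ε hε
  filter_upwards [Metric.tendstoUniformlyOn_iff.mp hK (ε / (M * (b - c) + 1)) (div_pos hε hM)]
    with i hi
  rw [dist_zero_right]
  refine (intervalIntegral.norm_integral_le_of_norm_le_const (C := ε / (M * (b - c) + 1) * M)
    fun t ht => ?_).trans_lt ?_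
  · rw [uIoc_of_le hcb] at ht
    have hKt := hi t ht
    rw [Pi.zero_apply, dist_zero_left] at hKt
    rw [norm_smul]
    exact mul_le_mul hKt.le (hg t ht) (norm_nonneg _) (div_pos hε hM).le
  · rw [abs_of_nonneg (sub_nonneg.mpr hcb), mul_assoc, div_mul_eq_mul_div,
      div_lt_iff₀ hM]
    nlinarith

theorem tendsto_integral_smul_of_tendstoUniformlyOn {ι : Type*} {l : Filter ι}
    {K : ι → ℝ → ℝ} {g : ℝ → E} {a b C : ℝ} (hab : a ≤ b) (hK : ∀ i t, 0 ≤ K i t)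
    (hKc : ∀ i, Continuous (K i)) (hmass : ∀ᶠ i in l, ∫ t in a..b, K i t ≤ C)
    (hdecay : ∀ δ > 0, TendstoUniformlyOn K 0 l (Icc (a + δ) b))
    (hg : ContinuousOn g (Icc a b)) (hga : g a = 0) :
    Tendsto (fun i => ∫ t in a..b, K i t • g t) l (𝓝 0) := by
  obtain ⟨M, hM⟩ := isCompact_Icc.exists_bound_of_continuousOn hg
  rw [Metric.tendsto_nhds]
  intro ε hε
  set η := ε / (2 * (|C| + 1))
  obtain ⟨δ, hδ, hnear⟩ := Metric.continuousWithinAt_iff.mp (hg a ⟨le_rfl, hab⟩) η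
    (by positivity)
  set c := min (a + δ / 2) b
  have hac : a ≤ c := le_min (by linarith) hab
  have hcb : c ≤ b := min_le_right _ _
  have hg_near : ∀ t ∈ Ioc a c, ‖g t‖ ≤ η := fun t ht => by
    have hgt := hnear ⟨ht.1.le, ht.2.trans hcb⟩ (by
      rw [Real.dist_eq, abs_of_pos (sub_pos.mpr ht.1)]
      linarith [ht.2, min_le_left (a + δ / 2) b])
    rw [hga, dist_zero_right] at hgt
    exact hgt.le
  have hfar := tendsto_integral_smul_of_tendstoUniformlyOn_zero hcb
    ((hdecay (δ / 2) (by positivity)).mono fun t ht =>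
      ⟨(min_lt_iff.mp ht.1).elim le_of_lt fun h => absurd ht.2 (not_le.mpr h), ht.2⟩)
    fun t ht => hM t ⟨hac.trans ht.1.le, ht.2⟩
  filter_upwards [hmass, Metric.tendsto_nhds.mp hfar (ε / 2) (by positivity)]
    with i hmass_i hfar_i
  have hnear_i : ‖∫ t in a..c, K i t • g t‖ < ε / 2 := by
    have hmono : ∫ t in a..c, K i t ≤ ∫ t in a..b, K i t :=
      intervalIntegral.integral_mono_interval le_rfl hac hcb (ae_of_all _ (hK i))
        ((hKc i).intervalIntegrable _ _)
    calc ‖∫ t in a..c, K i t • g t‖ ≤ η * ∫ t in a..c, K i t :=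
          norm_integral_smul_le_of_norm_le hac (hK i) ((hKc i).intervalIntegrable _ _) hg_near
      _ ≤ η * |C| := by gcongr; exact hmono.trans (hmass_i.trans (le_abs_self C))
      _ < ε / 2 := by
          rw [div_mul_eq_mul_div, div_lt_iff₀ (by positivity)]
          nlinarith [abs_nonneg C]
  have hint : ∀ {u v}, a ≤ u → u ≤ v → v ≤ b →
      IntervalIntegrable (fun t => K i t • g t) volume u v := fun hu huv hv =>
    (((hKc i).continuousOn.smul hg).mono
      (by rw [uIcc_of_le huv]; exact Icc_subset_Icc hu hv)).intervalIntegrable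
  rw [dist_zero_right] at hfar_i ⊢
  rw [← intervalIntegral.integral_add_adjacent_intervals (hint le_rfl hac hcb)
    (hint hac hcb le_rfl)]
  exact (norm_add_le _ _).trans_lt (by linarith)

end ApproximateIdentity

section Fejer

variable {E : Type*} [NormedAddCommGroup E] [NormedSpace ℝ E] [CompleteSpace E]

theorem tendsto_integral_fejerKernel_smul {g : ℝ → E} (hg : ContinuousOn g (Icc 0 π)) :
    Tendsto (fun N => π⁻¹ • ∫ t in (0 : ℝ)..π, fejerKernel N t • g t) atTop (𝓝 (g 0)) := by
  have hmass : ∀ᶠ N in atTop, ∫ t in (0 : ℝ)..π, fejerKernel N t ≤ π := by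
    filter_upwards [eventually_ne_atTop 0] with N hN
    rw [integral_fejerKernel_zero_pi hN]
  have hzero := tendsto_integral_smul_of_tendstoUniformlyOn (g := fun t => g t - g 0)
    Real.pi_pos.le fejerKernel_nonneg continuous_fejerKernel hmass
    (fun δ hδ => by simpa using tendstoUniformlyOn_fejerKernel hδ)
    (hg.sub continuousOn_const) (sub_self (g 0))
  refine ((hzero.const_smul π⁻¹).const_add (g 0)).congr' ?_ |>.trans_eq (by simp)
  filter_upwards [eventually_ne_atTop 0] with N hN
  have hKg : IntervalIntegrable (fun t => fejerKernel N t • g t) volume 0 π :=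
    ((continuous_fejerKernel N).continuousOn.smul
      (hg.mono (by rw [uIcc_of_le Real.pi_pos.le]))).intervalIntegrable
  have hKc : IntervalIntegrable (fun t => fejerKernel N t • g 0) volume 0 π :=
    ((continuous_fejerKernel N).smul continuous_const).intervalIntegrable _ _
  simp only [smul_sub]
  rw [intervalIntegral.integral_sub hKg hKc,
    intervalIntegral.integral_smul_const, integral_fejerKernel_zero_pi hN, smul_sub, smul_smul,
    inv_mul_cancel₀ Real.pi_ne_zero, one_smul]
  abel

theorem tendsto_integral_fejerKernel_smul_two_pi {g : ℝ → E}
    (hg : ContinuousOn g (Icc 0 (2 * π))) :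
    Tendsto (fun N => (2 * π)⁻¹ • ∫ t in (0 : ℝ)..2 * π, fejerKernel N t • g t) atTop
      (𝓝 ((2⁻¹ : ℝ) • (g 0 + g (2 * π)))) := by
  have hpi := Real.pi_pos
  have hg_left : ContinuousOn g (Icc 0 π) := hg.mono (Icc_subset_Icc le_rfl (by linarith))
  have hg_right : ContinuousOn (fun t => g (2 * π - t)) (Icc 0 π) :=
    hg.comp (by fun_prop) fun t ht => ⟨by linarith [ht.2], by linarith [ht.1]⟩
  have hint : ∀ N {u v : ℝ} {f : ℝ → E}, u ≤ v → ContinuousOn f (Icc u v) →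
      IntervalIntegrable (fun t => fejerKernel N t • f t) volume u v := fun N _ _ _ huv hf =>
    ((continuous_fejerKernel N).continuousOn.smul (uIcc_of_le huv ▸ hf)).intervalIntegrable
  have hfold : ∀ N, ∫ t in (0 : ℝ)..2 * π, fejerKernel N t • g t
      = ∫ t in (0 : ℝ)..π, fejerKernel N t • (g t + g (2 * π - t)) := by
    intro N
    have hreflect : ∫ t in π..2 * π, fejerKernel N t • g t
        = ∫ t in (0 : ℝ)..π, fejerKernel N t • g (2 * π - t) := by
      have := intervalIntegral.integral_comp_sub_left (fun t => fejerKernel N t • g t) (2 * π)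
        (a := 0) (b := π)
      rw [show 2 * π - π = π by ring, sub_zero] at this
      simpa only [fejerKernel_two_pi_sub] using this.symm
    rw [← intervalIntegral.integral_add_adjacent_intervals (hint N hpi.le hg_left)
      (hint N (by linarith) (hg.mono (Icc_subset_Icc hpi.le le_rfl))), hreflect,
      ← intervalIntegral.integral_add (hint N hpi.le hg_left) (hint N hpi.le hg_right)]
    simp only [smul_add]
  have hcont : ContinuousOn (fun t => g t + g (2 * π - t)) (Icc 0 π) := hg_left.add hg_right
  have hlim := (tendsto_integral_fejerKernel_smul hcont).const_smul (2⁻¹ : ℝ)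
  simp only [sub_zero] at hlim
  refine hlim.congr fun N => ?_
  rw [hfold, smul_smul, mul_inv]

end Fejer

section Cesaro

variable {E : Type*} [NormedAddCommGroup E] [NormedSpace ℂ E]

theorem sum_cesaro_smul_fourierCoeff {g : ℝ → E} (hg : ContinuousOn g (Icc 0 (2 * π)))
    {N : ℕ} (hN : N ≠ 0) :
    ∑ k ∈ Finset.Icc (-(N : ℤ)) N, (1 - (k.natAbs : ℝ) / N) •
        ((2 * π)⁻¹ • ∫ t in (0 : ℝ)..2 * π, exp (-(I * k * t)) • g t)
      = (2 * π)⁻¹ • ∫ t in (0 : ℝ)..2 * π, fejerKernel N t • g t := by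
  have hint : ∀ k : ℤ, IntervalIntegrable (fun t => exp (-(I * k * t)) • g t) volume 0 (2 * π) :=
    fun k => ((by fun_prop : Continuous fun t : ℝ => exp (-(I * k * t))).continuousOn.smul
      (uIcc_of_le (by positivity : (0 : ℝ) ≤ 2 * π) ▸ hg)).intervalIntegrable
  rw [Finset.sum_congr rfl fun k _ => smul_comm _ _ _, ← Finset.smul_sum,
    Finset.sum_congr rfl fun k _ => (intervalIntegral.integral_smul _ _).symm,
    ← intervalIntegral.integral_finsetSum fun k _ => by
      exact (hint k).smul (1 - (k.natAbs : ℝ) / N)]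
  congr 1
  refine intervalIntegral.integral_congr fun t _ => ?_
  simp_rw [← Complex.coe_smul, smul_smul, ← Finset.sum_smul, ← ofReal_fejerKernel hN]

variable [CompleteSpace E]

theorem hasCesaroSum_fourierCoeff {g : ℝ → E} (hg : ContinuousOn g (Icc 0 (2 * π))) :
    HasCesaroSum (fun k : ℤ => (2 * π)⁻¹ • ∫ t in (0 : ℝ)..2 * π, exp (-(I * k * t)) • g t)
      ((2⁻¹ : ℝ) • (g 0 + g (2 * π))) :=
  (tendsto_integral_fejerKernel_smul_two_pi hg).congr' <| by
    filter_upwards [eventually_ne_atTop 0] with N hN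
    exact (sum_cesaro_smul_fourierCoeff hg hN).symm

end Cesaro

theorem tendsto_inv_smul_exp_mul_sub_one (c : ℂ) :
    Tendsto (fun h : ℝ => h⁻¹ • (exp (c * h) - 1)) (𝓝[>] 0) (𝓝 c) := by
  have hderiv : HasDerivAt (fun h : ℝ => exp (c * h)) c 0 := by
    simpa using (((hasDerivAt_id (0 : ℂ)).const_mul c).cexp).comp_ofReal
  refine ((hasDerivAt_iff_tendsto_slope.mp hderiv).mono_left
    (nhdsWithin_mono 0 fun _ ht => ne_of_gt ht)).congr fun h => ?_
  simp [slope_def_module]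

theorem ContinuousOn.tendsto_inv_smul_integral {E : Type*} [NormedAddCommGroup E]
    [NormedSpace ℝ E] [CompleteSpace E] {f : ℝ → E} {c : ℝ} (hf : ContinuousOn f (Ici c)) :
    Tendsto (fun h => h⁻¹ • ∫ t in c..c + h, f t) (𝓝[>] 0) (𝓝 (f c)) := by
  have hderiv : HasDerivWithinAt (fun u => ∫ t in c..u, f t) (f c) (Ici c) c :=
    intervalIntegral.integral_hasDerivWithinAt_right (t := Ioi c) IntervalIntegrable.refl
      ((hf.mono Ioi_subset_Ici_self).stronglyMeasurableAtFilter_nhdsWithin measurableSet_Ioi c)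
      ((hf c (mem_Ici.mpr le_rfl)).mono Ioi_subset_Ici_self)
  have hshift : Tendsto (fun h : ℝ => c + h) (𝓝[>] 0) (𝓝[>] c) :=
    tendsto_nhdsWithin_iff.mpr ⟨by simpa using
      ((continuous_const_add c).tendsto 0).mono_left nhdsWithin_le_nhds,
      eventually_nhdsWithin_of_forall fun h hh => by simpa using hh⟩
  have hslope := (hasDerivWithinAt_iff_tendsto_slope.mp hderiv).comp (by simpa using hshift)
  refine hslope.congr fun h => ?_
  simp [slope_def_module]

namespace C0Semigroup

theorem intervalIntegrable_apply (S : C0Semigroup X) (x : X) {a b : ℝ} (ha : 0 ≤ a)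
    (hb : 0 ≤ b) : IntervalIntegrable (fun t => S.T t x) volume a b :=
  ((S.T_cont x).mono fun _ ht => (le_min ha hb).trans ht.1).intervalIntegrable

theorem tendsto_slope_integral [CompleteSpace X] (S : C0Semigroup X) (x : X) {τ : ℝ}
    (hτ : 0 ≤ τ) :
    Tendsto (fun h : ℝ => h⁻¹ • (S.T h (∫ t in (0 : ℝ)..τ, S.T t x) - ∫ t in (0 : ℝ)..τ, S.T t x))
      (𝓝[>] 0) (𝓝 (S.T τ x - x)) := by
  have hend := (S.T_cont x).mono (Ici_subset_Ici.mpr hτ) |>.tendsto_inv_smul_integral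
  have hstart := (S.T_cont x).tendsto_inv_smul_integral
  rw [S.T_zero, one_apply_eq_self] at hstart
  refine (hend.sub hstart).congr' ?_
  filter_upwards [self_mem_nhdsWithin] with h (hh : 0 < h)
  have hshift : S.T h (∫ t in (0 : ℝ)..τ, S.T t x) = ∫ t in h..τ + h, S.T t x := by
    have hsub := intervalIntegral.integral_comp_add_right (fun t => S.T t x) h (a := 0) (b := τ)
    rw [zero_add] at hsub
    rw [← hsub, ← ContinuousLinearMap.intervalIntegral_comp_comm _
      (S.intervalIntegrable_apply x le_rfl hτ)]
    refine intervalIntegral.integral_congr fun t ht => ?_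
    rw [uIcc_of_le hτ] at ht
    simp only [add_comm t h, S.T_add h t hh.le ht.1, ContinuousLinearMap.comp_apply]
  rw [hshift, intervalIntegral.integral_interval_sub_interval_comm'
      (S.intervalIntegrable_apply x hh.le (by linarith))
      (S.intervalIntegrable_apply x le_rfl hτ) (S.intervalIntegrable_apply x hh.le le_rfl),
    smul_sub, zero_add]

def rescale (S : C0Semigroup X) (μ : ℂ) : C0Semigroup X where
  T t := exp (μ * t) • S.T t
  T_zero := by simp [S.T_zero]
  T_add s t hs ht := by
    rw [S.T_add s t hs ht, ContinuousLinearMap.smul_comp, ContinuousLinearMap.comp_smul, smul_smul,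
      ← exp_add]
    push_cast; ring_nf
  T_cont x := (by fun_prop : Continuous fun t : ℝ => exp (μ * t)).continuousOn.smul (S.T_cont x)

theorem rescale_T_apply (S : C0Semigroup X) (μ : ℂ) (t : ℝ) (x : X) :
    (S.rescale μ).T t x = exp (μ * t) • S.T t x := rfl

theorem tendsto_slope_of_rescale (S : C0Semigroup X) (μ : ℂ) {y z : X}
    (h : Tendsto (fun h : ℝ => h⁻¹ • ((S.rescale μ).T h y - y)) (𝓝[>] 0) (𝓝 z)) :
    Tendsto (fun h : ℝ => h⁻¹ • (S.T h y - y)) (𝓝[>] 0) (𝓝 (z - μ • y)) := by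
  have hexp : Tendsto (fun h : ℝ => exp (-μ * h)) (𝓝[>] 0) (𝓝 1) := by
    simpa using ((by fun_prop : Continuous fun h : ℝ => exp (-μ * h)).tendsto 0).mono_left
      nhdsWithin_le_nhds
  have hlim := (hexp.smul h).add ((tendsto_inv_smul_exp_mul_sub_one (-μ)).smul_const y)
  rw [one_smul, neg_smul, ← sub_eq_add_neg] at hlim
  refine hlim.congr fun h => ?_
  rw [rescale_T_apply, smul_comm, smul_sub, smul_smul, ← exp_add, neg_mul, neg_add_cancel,
    exp_zero, one_smul, smul_assoc, ← smul_add]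
  congr 1
  module

theorem IsGenerator.exists_mem_domain_apply_eq {S : C0Semigroup X}
    {A : X →ₗ.[ℂ] X} (hGen : S.IsGenerator A) {y z : X}
    (h : Tendsto (fun h : ℝ => h⁻¹ • (S.T h y - y)) (𝓝[>] 0) (𝓝 z)) :
    ∃ hy : y ∈ A.domain, A ⟨y, hy⟩ = z :=
  ⟨(hGen.1 y).mpr ⟨z, h⟩, tendsto_nhds_unique (hGen.2 _) h⟩

end C0Semigroup

theorem IsResolventAt.apply_sub_exp_smul [CompleteSpace X] {S : C0Semigroup X}
    {A : X →ₗ.[ℂ] X} (hGen : S.IsGenerator A) {lam : ℂ} {R : X →L[ℂ] X}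
    (hR : IsResolventAt A lam R) {τ : ℝ} (hτ : 0 ≤ τ) (x : X) :
    R (x - exp (-(lam * τ)) • S.T τ x) = ∫ t in (0 : ℝ)..τ, exp (-(lam * t)) • S.T t x := by
  obtain ⟨hy, hAy⟩ := hGen.exists_mem_domain_apply_eq
    (S.tendsto_slope_of_rescale (-lam) ((S.rescale (-lam)).tendsto_slope_integral x hτ))
  have hRy := hR.2 ⟨_, hy⟩
  rw [hAy] at hRy
  simp only [C0Semigroup.rescale_T_apply, neg_mul] at hRy
  rw [← hRy]
  congr 1
  module

/-- from the proof of Theorem 4.1: for `iℤ ⊂ ρ(A)`,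
`(1/2π) R(ik)(I - T_{2π})x = (1/2π)∫_0^{2π} e^{-ikt} T_t x dt`, and consequently
`(1/2π)(C,1)∑_{k∈ℤ} R(ik)(I - T_{2π})x = ½(I + T_{2π})x`. -/
theorem discrete_resolvent_identity_and_cesaro
    {X : Type*} [NormedAddCommGroup X] [NormedSpace ℂ X] [CompleteSpace X]
    (S : C0Semigroup X) (A : X →ₗ.[ℂ] X) (hGen : S.IsGenerator A)
    (R : ℂ → X →L[ℂ] X)
    (hres : ∀ k : ℤ, IsResolventAt A (Complex.I * (k : ℂ)) (R (Complex.I * (k : ℂ)))) :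
    (∀ (k : ℤ) (x : X),
      R (Complex.I * (k : ℂ)) (x - S.T (2 * Real.pi) x)
        = ∫ t in (0:ℝ)..(2 * Real.pi),
            Complex.exp (-(Complex.I * (k : ℂ) * (t : ℂ))) • S.T t x) ∧
    (∀ x : X,
      HasCesaroSum
        (fun k : ℤ => (2 * Real.pi)⁻¹ •
          R (Complex.I * (k : ℂ)) (x - S.T (2 * Real.pi) x))
        ((2⁻¹ : ℝ) • (x + S.T (2 * Real.pi) x))) := by
  have hidentity : ∀ (k : ℤ) (x : X), R (I * k) (x - S.T (2 * π) x)
      = ∫ t in (0 : ℝ)..2 * π, exp (-(I * k * t)) • S.T t x := fun k x => by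
    have h := (hres k).apply_sub_exp_smul hGen (by positivity : (0 : ℝ) ≤ 2 * π) x
    rwa [exp_neg_I_mul_intCast_mul_two_pi, one_smul] at h
  refine ⟨hidentity, fun x => ?_⟩
  simp_rw [hidentity]
  simpa [S.T_zero] using
    hasCesaroSum_fourierCoeff (g := fun t => S.T t x) ((S.T_cont x).mono Icc_subset_Ici_self)
end
end
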